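/- Let R = k°[q,q⁻¹] with q transcendental over k° in a field k. Let φ: A → B be an R-algebra homomorphism with B torsionfree over R, and I an ideal of A with I ⊆ ker φ. Suppose there are R-module decompositions I = ⊕_j I_j, A = ⊕_j A_j, B = ⊕_j B_j with each A_j finitely generated, I_j ⊆ A_j, and φ(A_j) ⊆ B_j. If the kernel of the induced map φ̄: A/(q-1)A → B/(q-1)B equals the image of I/(q-1)I, then the kernel of id⊗φ: k⊗_R A → k⊗_R B equals the image of k⊗_R I. -/

import Mathlib

/-!
Since `q` is transcendental, `R → k` is injective, so `k` is a flat `R`-algebra in which every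
nonzero element of `R` is invertible; hence it suffices to show that `ker φ / I` is `R`-torsion.
The hypothesis on `φ̄` and torsion-freeness of `B` give `ker φ ⊆ I + (q - 1) ker φ`. This
inclusion passes to the homogeneous pieces `ker φ ∩ A_j`, which are finitely generated because
`R` is Noetherian, so Nakayama's lemma provides `r ≡ 1 mod (q - 1)`, in particular `r ≠ 0`, with
`r (ker φ ∩ A_j) ⊆ I`.
-/

open TensorProduct DirectSum Submodule
open scoped nonZeroDivisors Pointwise

namespace LaurentPolynomial

open Polynomial

variable {R S : Type*}

instance isNoetherianRing [CommRing R] [IsNoetherianRing R] : IsNoetherianRing R[T;T⁻¹] :=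
  IsLocalization.isNoetherianRing (.powers (X : R[X])) _ inferInstance

theorem T_one_sub_one_ne_zero [Ring R] [Nontrivial R] : (T 1 - 1 : R[T;T⁻¹]) ≠ 0 := by
  rw [sub_ne_zero, ← T_zero]
  intro h
  have := congrArg (fun f : R[T;T⁻¹] ↦ f.coeff 1) h
  simp only [T_apply] at this
  simp at this

theorem not_isUnit_T_one_sub_one [CommRing R] [Nontrivial R] : ¬IsUnit (T 1 - 1 : R[T;T⁻¹]) := by
  intro h
  simpa using h.map (eval₂ (RingHom.id R) 1)

theorem _root_.Polynomial.toLaurent_eq_aeval [CommRing R] (p : R[X]) :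
    toLaurent p = aeval (T 1 : R[T;T⁻¹]) p := by
  induction p using Polynomial.induction_on' with
  | add p q hp hq => simp [hp, hq]
  | monomial n a => simp [← C_mul_X_pow_eq_monomial, T_pow]

theorem algebraMap_toLaurent [CommRing R] [CommRing S] [Algebra R S] [Algebra R[T;T⁻¹] S]
    [IsScalarTower R R[T;T⁻¹] S] (p : R[X]) :
    algebraMap R[T;T⁻¹] S (toLaurent p) = aeval (algebraMap R[T;T⁻¹] S (T 1)) p := by
  rw [← IsScalarTower.coe_toAlgHom' R R[T;T⁻¹] S, aeval_algHom_apply, toLaurent_eq_aeval]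

theorem algebraMap_injective_of_transcendental [CommRing R] [CommRing S] [Algebra R S]
    [Algebra R[T;T⁻¹] S] [IsScalarTower R R[T;T⁻¹] S]
    (h : Transcendental R (algebraMap R[T;T⁻¹] S (T 1))) :
    Function.Injective (algebraMap R[T;T⁻¹] S) := by
  refine (injective_iff_map_eq_zero _).mpr fun f hf ↦ ?_
  obtain ⟨n, p, hp⟩ := f.exists_T_pow
  have : aeval (algebraMap R[T;T⁻¹] S (T 1)) p = 0 := by
    rw [← algebraMap_toLaurent, hp, map_mul, hf, zero_mul]
  rw [transcendental_iff.mp h p this, map_zero] at hp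
  exact (isUnit_T (n : ℤ)).mul_left_eq_zero.mp hp.symm

end LaurentPolynomial

namespace DirectSum

variable {ι R M N : Type*} [DecidableEq ι]

section Semiring

variable [Semiring R] [AddCommMonoid M] [AddCommMonoid N] [Module R M] [Module R N]
  (𝒜 : ι → Submodule R M) (ℬ : ι → Submodule R N) [Decomposition 𝒜] [Decomposition ℬ]

theorem decompose_map_of_mapsTo (f : M →ₗ[R] N) (hf : ∀ i, ∀ a ∈ 𝒜 i, f a ∈ ℬ i)
    (a : M) (j : ι) : (decompose ℬ (f a) j : N) = f (decompose 𝒜 a j) := by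
  induction a using Decomposition.inductionOn 𝒜 with
  | zero => simp
  | @homogeneous i m =>
    by_cases hij : i = j
    · subst hij
      rw [decompose_of_mem_same ℬ (hf i m m.2), decompose_coe, of_eq_same]
    · rw [decompose_of_mem_ne ℬ (hf i m m.2) hij, decompose_of_mem_ne 𝒜 m.2 hij, map_zero]
  | add a b ha hb => simp [ha, hb]

theorem isHomogeneous_ker (f : M →ₗ[R] N) (hf : ∀ i, ∀ a ∈ 𝒜 i, f a ∈ ℬ i) :
    SetLike.IsHomogeneous 𝒜 (LinearMap.ker f) := fun j x hx ↦ by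
  rw [LinearMap.mem_ker, ← decompose_map_of_mapsTo 𝒜 ℬ f hf, LinearMap.mem_ker.mp hx]
  simp

theorem isHomogeneous_iSup_of_le (𝒩 : ι → Submodule R M) (h : ∀ i, 𝒩 i ≤ 𝒜 i) :
    SetLike.IsHomogeneous 𝒜 (⨆ i, 𝒩 i) := fun j x hx ↦ by
  induction hx using iSup_induction' with
  | mem i x hx =>
    by_cases hij : i = j
    · subst hij
      rw [decompose_of_mem_same 𝒜 (h i hx)]
      exact mem_iSup_of_mem i hx
    · rw [decompose_of_mem_ne 𝒜 (h i hx) hij]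
      exact zero_mem _
  | zero => simp
  | add x y _ _ hx hy => simpa using add_mem hx hy

end Semiring

variable [CommRing R] [AddCommGroup M] [Module R M] (𝒜 : ι → Submodule R M) [Decomposition 𝒜]

theorem inf_le_sup_smul_inf {P I : Submodule R M} {𝔞 : Ideal R} (hP : SetLike.IsHomogeneous 𝒜 P)
    (hI : SetLike.IsHomogeneous 𝒜 I) (h : P ≤ I ⊔ 𝔞 • P) (j : ι) :
    P ⊓ 𝒜 j ≤ I ⊔ 𝔞 • (P ⊓ 𝒜 j) := by
  have smul_component : ∀ w ∈ 𝔞 • P, (decompose 𝒜 w j : M) ∈ 𝔞 • (P ⊓ 𝒜 j) := by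
    intro w hw
    refine smul_induction_on hw (fun r hr n hn ↦ ?_) fun w w' hw hw' ↦ ?_
    · rw [decompose_smul, DirectSum.smul_apply, coe_smul]
      exact smul_mem_smul hr ⟨hP j hn, (decompose 𝒜 n j).2⟩
    · simpa using add_mem hw hw'
  rintro x ⟨hxP, hxj⟩
  obtain ⟨y, hy, w, hw, rfl⟩ := mem_sup.mp (h hxP)
  rw [← decompose_of_mem_same 𝒜 hxj, decompose_add, add_apply, Submodule.coe_add]
  exact add_mem_sup (hI j hy) (smul_component w hw)

end DirectSum

namespace Submodule

variable {R M : Type*} [CommRing R] [IsDomain R] [AddCommGroup M] [Module R M]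

theorem exists_mem_nonZeroDivisors_smul_le_of_le_sup_smul {N P : Submodule R M} (hP : P.FG)
    {𝔞 : Ideal R} (h𝔞 : 𝔞 ≠ ⊤) (h : P ≤ N ⊔ 𝔞 • P) : ∃ r ∈ R⁰, r • P ≤ N := by
  obtain ⟨r, hr1, hrP⟩ := exists_sub_one_mem_and_smul_le_of_fg_of_le_sup hP le_rfl h
  refine ⟨r, mem_nonZeroDivisors_of_ne_zero ?_, hrP⟩
  rintro rfl
  exact h𝔞 ((Ideal.eq_top_iff_one _).mpr (by simpa using 𝔞.neg_mem hr1))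

theorem le_comap_mkQ_torsion_of_le_sup_smul [IsNoetherianRing R] {ι : Type*} [DecidableEq ι]
    (𝒜 : ι → Submodule R M) [Decomposition 𝒜] (h𝒜 : ∀ i, (𝒜 i).FG) {𝔞 : Ideal R} (h𝔞 : 𝔞 ≠ ⊤)
    {P I : Submodule R M} (hP : SetLike.IsHomogeneous 𝒜 P) (hI : SetLike.IsHomogeneous 𝒜 I)
    (h : P ≤ I ⊔ 𝔞 • P) : P ≤ (torsion R (M ⧸ I)).comap I.mkQ := by
  classical
  intro x hx
  rw [← sum_support_decompose 𝒜 x]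
  refine sum_mem fun j _ ↦ ?_
  obtain ⟨r, hr, hrP⟩ := exists_mem_nonZeroDivisors_smul_le_of_le_sup_smul
    ((h𝒜 j).of_le inf_le_right) h𝔞 (inf_le_sup_smul_inf 𝒜 hP hI h j)
  refine (mem_torsion_iff _).mpr ⟨⟨r, hr⟩, ?_⟩
  rw [Submonoid.mk_smul, ← map_smul, mkQ_apply, Quotient.mk_eq_zero]
  exact hrP (smul_mem_pointwise_smul _ r _ ⟨hP j hx, (decompose 𝒜 x j).2⟩)

end Submodule

theorem LinearMap.ker_le_sup_smul_ker {R M N : Type*} [CommRing R] [AddCommGroup M]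
    [AddCommGroup N] [Module R M] [Module R N] [NoZeroSMulDivisors R N] (f : M →ₗ[R] N)
    {I : Submodule R M} (hI : I ≤ ker f) {t : R} (ht : t ≠ 0)
    (h : ∀ x ∈ ker f, ∃ y ∈ I, ∃ z, x = y + t • z) : ker f ≤ I ⊔ Ideal.span {t} • ker f := by
  intro x hx
  obtain ⟨y, hy, z, rfl⟩ := h x hx
  have hz : f z = 0 := by
    have : t • f z = 0 := by simpa [mem_ker.mp (hI hy)] using mem_ker.mp hx
    exact (eq_zero_or_eq_zero_of_smul_eq_zero this).resolve_left ht
  exact add_mem_sup hy (smul_mem_smul (Ideal.mem_span_singleton_self t) hz)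

theorem LinearMap.ker_baseChange_eq_range_of_le_comap_mkQ_torsion {R S M N : Type*} [CommRing R]
    [CommRing S] [Algebra R S] [Module.Flat R S] [AddCommGroup M] [AddCommGroup N] [Module R M]
    [Module R N] (f : M →ₗ[R] N) {I : Submodule R M} (hI : I ≤ ker f)
    (hS : ∀ r ∈ R⁰, IsUnit (algebraMap R S r)) (hK : ker f ≤ (torsion R (M ⧸ I)).comap I.mkQ) :
    ker (f.baseChange S) = range (I.subtype.baseChange S) := by
  rw [show ker (f.baseChange S) = range ((ker f).subtype.baseChange S) from
    Module.Flat.ker_lTensor_eq S S f]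
  refine le_antisymm ?_ ?_
  · rintro _ ⟨z, rfl⟩
    induction z with
    | zero => simp
    | tmul c x =>
      obtain ⟨⟨r, hr⟩, hrx⟩ := (mem_torsion_iff _).mp (hK x.2)
      rw [Submonoid.mk_smul, ← map_smul, mkQ_apply, Quotient.mk_eq_zero] at hrx
      obtain ⟨u, hu⟩ := hS r hr
      refine ⟨(↑u⁻¹ * c) ⊗ₜ ⟨r • x, hrx⟩, ?_⟩
      rw [baseChange_tmul, baseChange_tmul, subtype_apply, ← smul_tmul, Algebra.smul_def, ← hu,
        Units.mul_inv_cancel_left]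
      rfl
    | add z w hz hw => rw [map_add]; exact add_mem hz hw
  · rw [← subtype_comp_inclusion I (ker f) hI, baseChange_comp]
    exact range_comp_le_range _ _

theorem Module.Flat.of_injective_algebraMap {R K : Type*} [CommRing R] [IsDomain R] [Field K]
    [Algebra R K] (h : Function.Injective (algebraMap R K)) : Module.Flat R K := by
  let _ : Algebra (FractionRing R) K := (IsFractionRing.lift h).toAlgebra
  have : IsScalarTower R (FractionRing R) K :=
    .of_algebraMap_eq fun x ↦ (IsFractionRing.lift_algebraMap h x).symm
  have : Module.Flat R (FractionRing R) := IsLocalization.flat _ R⁰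
  exact .trans R (FractionRing R) K

open TensorProduct in
/-- Quantum Second Fundamental Theorem transfer: `R = k°[q,q⁻¹]`
with `q = T 1` transcendental over `k°` in a field `k`.  `φ : A → B` is an
`R`-algebra homomorphism with `B` torsionfree, `I ⊆ ker φ` an ideal of `A`,
with compatible direct sum decompositions (`A_j` finitely generated,
`I_j ⊆ A_j`).  If the kernel of `φ̄ : A/(q-1)A → B/(q-1)B` equals the image of
`I/(q-1)I`, then the kernel of `id ⊗ φ : k ⊗_R A → k ⊗_R B` equals the image
of `k ⊗_R I`. -/
theorem stmt_8 (k₀ : Type*) [Field k₀]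
    (k : Type*) [Field k] [Algebra k₀ k] [Algebra (LaurentPolynomial k₀) k]
    [IsScalarTower k₀ (LaurentPolynomial k₀) k]
    (htrans : Transcendental k₀
      (algebraMap (LaurentPolynomial k₀) k (LaurentPolynomial.T 1)))
    (A B : Type*) [Ring A] [Ring B]
    [Algebra (LaurentPolynomial k₀) A] [Algebra (LaurentPolynomial k₀) B]
    (φ : A →ₐ[LaurentPolynomial k₀] B)
    (htfB : NoZeroSMulDivisors (LaurentPolynomial k₀) B)
    (I : Ideal A) (hI : ∀ x ∈ I, φ x = 0)
    -- direct sum decompositions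
    (J : Type*) [DecidableEq J]
    (Ij Aj : J → Submodule (LaurentPolynomial k₀) A)
    (Bj : J → Submodule (LaurentPolynomial k₀) B)
    (hAdec : DirectSum.IsInternal Aj) (hBdec : DirectSum.IsInternal Bj)
    (hIsum : ⨆ j, Ij j = Submodule.restrictScalars (LaurentPolynomial k₀) I)
    (hIA : ∀ j, Ij j ≤ Aj j)
    (hAfg : ∀ j, (Aj j).FG)
    (hφj : ∀ j, ∀ a ∈ Aj j, φ a ∈ Bj j)
    -- `ker φ̄` equals the image of `I/(q-1)I` in `A/(q-1)A`
    (hred : ∀ a : A,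
      (∃ b : B, φ a = ((LaurentPolynomial.T 1 - 1 : LaurentPolynomial k₀)) • b) ↔
      (∃ x ∈ I, ∃ a' : A, a = x +
        ((LaurentPolynomial.T 1 - 1 : LaurentPolynomial k₀)) • a')) :
    -- conclusion: `ker (id ⊗ φ)` equals the image of `k ⊗_R I`
    (RingHom.ker (Algebra.TensorProduct.map (AlgHom.id k k) φ)).restrictScalars k =
      LinearMap.range (LinearMap.baseChange k
        (Submodule.subtype (Submodule.restrictScalars (LaurentPolynomial k₀) I))) := by
  let _ := hAdec.chooseDecomposition
  let _ := hBdec.chooseDecomposition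
  have := htfB
  have hinj := LaurentPolynomial.algebraMap_injective_of_transcendental htrans
  have := Module.Flat.of_injective_algebraMap hinj
  have hIhom : SetLike.IsHomogeneous Aj (I.restrictScalars (LaurentPolynomial k₀)) :=
    hIsum ▸ DirectSum.isHomogeneous_iSup_of_le Aj Ij hIA
  have hKhom := DirectSum.isHomogeneous_ker Aj Bj φ.toLinearMap hφj
  have hKI := φ.toLinearMap.ker_le_sup_smul_ker (I := I.restrictScalars _) (fun x hx ↦ hI x hx)
    LaurentPolynomial.T_one_sub_one_ne_zero fun x hx ↦ (hred x).mp ⟨0, by simpa using hx⟩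
  have htors := Submodule.le_comap_mkQ_torsion_of_le_sup_smul Aj hAfg
    (Ideal.span_singleton_ne_top LaurentPolynomial.not_isUnit_T_one_sub_one) hKhom hIhom hKI
  exact φ.toLinearMap.ker_baseChange_eq_range_of_le_comap_mkQ_torsion (fun x hx ↦ hI x hx)
    (fun r hr ↦ (map_ne_zero_of_mem_nonZeroDivisors _ hinj hr).isUnit) htors
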